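/- Let n and k be natural numbers with 1 \le k and 3k < n + 1. Then \binom{n}{k} \ge \binom{n}{0} + \sum_{i=0}^{k-1} \binom{n}{i}, i.e., \binom{n}{k} \ge 1 + \sum_{i=0}^{k-1} \binom{n}{i}. -/
import Mathlib

lemma two_mul_choose_le (n k : ℕ) (h : 3 * k + 2 ≤ n) :
    2 * n.choose k ≤ n.choose (k + 1) := by
  have key := Nat.choose_succ_right_eq n k
  have hnk : 2 * (k + 1) ≤ n - k := by omega
  have h1 : n.choose k * (2 * (k + 1)) ≤ n.choose k * (n - k) :=
    Nat.mul_le_mul_left _ hnk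
  rw [← key] at h1
  have := Nat.le_of_mul_le_mul_right (by linarith [h1] : 2 * n.choose k * (k + 1) ≤ n.choose (k+1) * (k+1)) (by omega)
  exact this

theorem choose_ge_one_add_sum_choose (n k : ℕ) (hk : 1 ≤ k) (h : 3 * k < n + 1) :
    n.choose k ≥ 1 + ∑ i ∈ Finset.range k, n.choose i := by
  induction k with
  | zero => omega
  | succ m ih =>
    rcases Nat.eq_zero_or_pos m with hm | hm
    · subst hm
      simp [Nat.choose_one_right]
      omega
    · have ihm := ih hm (by omega)
      have h2 : 2 * n.choose m ≤ n.choose (m + 1) := two_mul_choose_le n m (by omega)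
      rw [Finset.sum_range_succ]
      omega
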